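/- arXiv:2505.15163 — 4 statements merged into one kernel-verified Lean document; each statement's English description precedes it below -/
import Mathlib

section
/- A finite p-group P satisfies Ω₁Z(P) ≤ Φ(P) if and only if for every nontrivial normal subgroup N of P one has N ∩ Φ(P) ≠ 1. -/
/-!
A nontrivial normal subgroup `N` of a finite `p`-group meets the centre nontrivially, since
conjugation fixes `1 ∈ N` and the number of fixed points is `≡ |N| ≡ 0 (mod p)`; by Cauchy it
then contains a central element of order `p`, which lies in `Φ(P)` if `P` is atoric. Conversely,
a central element `g` of order `p` generates a normal subgroup of prime order, so the nontrivial
subgroup `⟨g⟩ ⊓ Φ(P)` of it must be all of `⟨g⟩`.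
-/

open Subgroup

namespace Subgroup

variable {G : Type*} [Group G]

theorem normal_of_le_center {H : Subgroup G} (hH : H ≤ center G) : H.Normal :=
  ⟨fun n hn g => by rwa [mem_center_iff.mp (hH hn) g, mul_inv_cancel_right]⟩

theorem eq_of_le_of_card_prime {H K : Subgroup G} (hHK : H ≤ K) (hK : (Nat.card K).Prime)
    (hH : H ≠ ⊥) : H = K := by
  have : Finite K := Nat.finite_of_card_ne_zero hK.ne_zero
  have hcard : Nat.card H = Nat.card K :=
    (hK.eq_one_or_self_of_dvd _ (card_dvd_of_le hHK)).resolve_left (by rwa [card_eq_one])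
  exact eq_of_le_of_card_ge hHK hcard.ge

end Subgroup

namespace IsPGroup

variable {p : ℕ} [Fact p.Prime] {G : Type*} [Group G] [Finite G]

theorem inf_center_ne_bot (hG : IsPGroup p G) {N : Subgroup G} [N.Normal] (hN : N ≠ ⊥) :
    N ⊓ center G ≠ ⊥ := by
  have hNp : p ∣ Nat.card N := by
    have : Nontrivial N := (nontrivial_iff_ne_bot N).mpr hN
    obtain ⟨n, hn, hcard⟩ := (hG.to_subgroup N).nontrivial_iff_card.mp this
    exact hcard ▸ dvd_pow_self p hn.ne'
  have h1 : (1 : N) ∈ MulAction.fixedPoints (ConjAct G) N := fun g => by simp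
  obtain ⟨b, hb, hb1⟩ :=
    (hG.of_equiv ConjAct.toConjAct).exists_fixed_point_of_prime_dvd_card_of_fixed_point N hNp h1
  have hbZ : (b : G) ∈ (center G : Set G) := by
    rw [← ConjAct.fixedPoints_eq_center]
    exact fun g => congrArg Subtype.val (hb g)
  refine ne_bot_iff_exists_ne_one.mpr ⟨⟨b, b.2, hbZ⟩, fun h => hb1 ?_⟩
  exact Subtype.ext (congrArg Subtype.val h).symm

theorem exists_orderOf_eq_prime_mem_inf_center (hG : IsPGroup p G) {N : Subgroup G} [N.Normal]
    (hN : N ≠ ⊥) :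
    ∃ x ∈ N ⊓ center G, orderOf x = p := by
  have : Nontrivial (N ⊓ center G : Subgroup G) :=
    (nontrivial_iff_ne_bot _).mpr (hG.inf_center_ne_bot hN)
  obtain ⟨n, hn, hcard⟩ := (hG.to_subgroup _).nontrivial_iff_card.mp this
  obtain ⟨x, hx⟩ := exists_prime_orderOf_dvd_card' p (hcard ▸ dvd_pow_self p hn.ne')
  exact ⟨x, x.2, by rwa [Subgroup.orderOf_coe]⟩

end IsPGroup

/-- A finite `p`-group `P` satisfies `Ω₁Z(P) ≤ Φ(P)` if and only if every nontrivial normal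
subgroup `N` of `P` satisfies `N ⊓ Φ(P) ≠ ⊥`. -/
theorem atoric_iff_normal_meets_frattini {p : ℕ} [Fact p.Prime] {P : Type*} [Group P]
    [Finite P] (hP : IsPGroup p P) :
    (∀ g ∈ Subgroup.center P, g ^ p = 1 → g ∈ frattini P) ↔
      ∀ N : Subgroup P, N.Normal → N ≠ ⊥ → N ⊓ frattini P ≠ ⊥ := by
  constructor
  · intro h N hN hN_ne heq
    obtain ⟨x, ⟨hxN, hxZ⟩, hx⟩ := hP.exists_orderOf_eq_prime_mem_inf_center hN_ne
    have hxΦ : x ∈ N ⊓ frattini P := ⟨hxN, h x hxZ (hx ▸ pow_orderOf_eq_one x)⟩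
    rw [heq, mem_bot] at hxΦ
    exact (Fact.out : p.Prime).one_lt.ne' (hx ▸ hxΦ ▸ orderOf_one)
  · intro h g hgZ hgp
    rcases eq_or_ne g 1 with rfl | hg1
    · exact one_mem _
    have hcard : (Nat.card (zpowers g)).Prime := by
      rw [Nat.card_zpowers, orderOf_eq_prime hgp hg1]
      exact Fact.out
    have hN : (zpowers g).Normal := normal_of_le_center (zpowers_le.mpr hgZ)
    have hinf := eq_of_le_of_card_prime inf_le_left hcard (h _ hN (zpowers_ne_bot.mpr hg1))
    exact inf_eq_left.mp hinf (mem_zpowers g)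
end

section
/- A finite p-group P admits a nontrivial direct factor which is elementary abelian (P ≅ E × Q with E nontrivial elementary abelian) if and only if there exists a nontrivial normal subgroup N of P with N ∩ Φ(P) = 1. -/
/-!
Every maximal subgroup of a finite `p`-group is normal of index `p`, so `P ⧸ Φ(P)` is elementary
abelian. An elementary abelian group is a vector space over `ZMod p`, hence its subgroup lattice is
complemented and its Frattini subgroup is trivial.

If `P = E × Q` with `E` elementary abelian, then `Φ(P)` maps into `Φ(P ⧸ Q) ≅ Φ(E) = 1`, so
`E ∩ Φ(P) = 1`. Conversely, if `N ∩ Φ(P) = 1` then `N` embeds into `P ⧸ Φ(P)` and is therefore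
elementary abelian, and the preimage of a complement of its image is a normal complement of `N`.
-/

open Subgroup
open scoped commutatorElement

theorem Order.radical_eq_bot_of_complementedLattice {α : Type*} [CompleteLattice α]
    [IsCoatomic α] [ComplementedLattice α] : Order.radical α = ⊥ := by
  obtain ⟨c, hc⟩ := exists_isCompl (Order.radical α)
  have hc_top : c = ⊤ := Order.radical_nongenerating (sup_comm c _ ▸ hc.sup_eq_top)
  simpa [hc_top] using hc.inf_eq_bot

section ElementaryAbelian

open scoped IsMulCommutative

variable {G : Type*} [Group G] [IsMulCommutative G] {p : ℕ} [Fact p.Prime]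

theorem Subgroup.complementedLattice_of_pow_eq_one (hG : ∀ g : G, g ^ p = 1) :
    ComplementedLattice (Subgroup G) :=
  letI : Module (ZMod p) (Additive G) :=
    AddCommGroup.zmodModule fun x => congrArg Additive.ofMul (hG x.toMul)
  (Subgroup.toAddSubgroup.trans (AddSubgroup.toZModSubmodule p)).symm.complementedLattice

theorem frattini_eq_bot_of_pow_eq_one [Finite G] (hG : ∀ g : G, g ^ p = 1) : frattini G = ⊥ :=
  haveI := complementedLattice_of_pow_eq_one hG
  Order.radical_eq_bot_of_complementedLattice

end ElementaryAbelian

theorem Subgroup.map_mk'_eq_top_of_codisjoint {G : Type*} [Group G] {E Q : Subgroup G}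
    [Q.Normal] (h : Codisjoint E Q) : E.map (QuotientGroup.mk' Q) = ⊤ := by
  rw [← map_top_of_surjective _ (QuotientGroup.mk'_surjective Q), ← h.eq_top, map_sup,
    QuotientGroup.map_mk'_self, sup_bot_eq]

theorem Subgroup.exists_normal_isCompl_of_disjoint {G : Type*} [Group G] {K : Subgroup G}
    [K.Normal] [IsMulCommutative (G ⧸ K)] [ComplementedLattice (Subgroup (G ⧸ K))]
    {H : Subgroup G} (hHK : Disjoint H K) : ∃ Q : Subgroup G, Q.Normal ∧ IsCompl H Q := by
  set π := QuotientGroup.mk' K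
  obtain ⟨W, hW⟩ := exists_isCompl (H.map π)
  have hKQ : K ≤ W.comap π := QuotientGroup.le_comap_mk' K W
  refine ⟨W.comap π, (normal_of_isMulCommutative W).comap π, ⟨?_, ?_⟩⟩
  · rw [disjoint_def]
    intro x hxH hxQ
    have : π x = 1 := disjoint_def.mp hW.disjoint (mem_map_of_mem π hxH) hxQ
    exact disjoint_def.mp hHK hxH ((QuotientGroup.eq_one_iff x).mp this)
  · have hmap : (H ⊔ W.comap π).map π = ⊤ := by
      rw [map_sup, map_comap_eq_self_of_surjective (QuotientGroup.mk'_surjective K)]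
      exact hW.sup_eq_top
    rw [codisjoint_iff, ← sup_eq_right.mpr (hKQ.trans le_sup_right),
      ← QuotientGroup.comap_map_mk', hmap, comap_top]

theorem Subgroup.inf_frattini_eq_bot_of_isCompl {G : Type*} [Group G] [Finite G] {p : ℕ}
    [Fact p.Prime] {E Q : Subgroup G} [Q.Normal] (hEQ : IsCompl E Q)
    (hcomm : ∀ x ∈ E, ∀ y ∈ E, x * y = y * x) (hpow : ∀ x ∈ E, x ^ p = 1) :
    E ⊓ frattini G = ⊥ := by
  set π := QuotientGroup.mk' Q
  have hlift (a : G ⧸ Q) : ∃ x ∈ E, π x = a :=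
    mem_map.mp ((map_mk'_eq_top_of_codisjoint hEQ.codisjoint).symm ▸ mem_top a)
  have : IsMulCommutative (G ⧸ Q) := isMulCommutative_iff.mpr fun a b => by
    obtain ⟨x, hx, rfl⟩ := hlift a
    obtain ⟨y, hy, rfl⟩ := hlift b
    rw [← map_mul, ← map_mul, hcomm x hx y hy]
  have hfr : frattini (G ⧸ Q) = ⊥ := frattini_eq_bot_of_pow_eq_one (p := p) fun a => by
    obtain ⟨x, hx, rfl⟩ := hlift a
    rw [← map_pow, hpow x hx, map_one]
  rw [← disjoint_iff, disjoint_def]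
  intro x hxE hxΦ
  have : π x ∈ frattini (G ⧸ Q) :=
    frattini_le_comap_frattini_of_surjective (QuotientGroup.mk'_surjective Q) hxΦ
  rw [hfr, mem_bot, QuotientGroup.mk'_apply, QuotientGroup.eq_one_iff] at this
  exact disjoint_def.mp hEQ.disjoint hxE this

theorem Subgroup.mem_frattini_iff {G : Type*} [Group G] {x : G} :
    x ∈ frattini G ↔ ∀ M : Subgroup G, IsCoatom M → x ∈ M := by
  simp [frattini, Order.radical, mem_iInf]

namespace IsPGroup

variable {p : ℕ} [Fact p.Prime] {P : Type*} [Group P] [Finite P]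

theorem normal_of_isCoatom (hP : IsPGroup p P) {M : Subgroup P} (hM : IsCoatom M) : M.Normal :=
  have := hP.isNilpotent
  NormalizerCondition.normal_of_coatom M Group.normalizerCondition_of_isNilpotent hM

theorem exists_pow_eq_one_and_zpowers_eq_top_of_isCoatom (hP : IsPGroup p P) {M : Subgroup P}
    [M.Normal] (hM : IsCoatom M) : ∃ g : P ⧸ M, g ^ p = 1 ∧ zpowers g = ⊤ := by
  have : Nontrivial (P ⧸ M) := QuotientGroup.nontrivial_iff.mpr hM.1
  obtain ⟨n, hn, hcard⟩ := (hP.to_quotient M).nontrivial_iff_card.mp this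
  obtain ⟨g, hg⟩ :=
    exists_prime_orderOf_dvd_card' (G := P ⧸ M) p (hcard ▸ dvd_pow_self p hn.ne')
  refine ⟨g, hg ▸ pow_orderOf_eq_one g, ?_⟩
  have hsurj := QuotientGroup.mk'_surjective M
  refine comap_injective hsurj (hM.2 _ (lt_of_le_of_ne (QuotientGroup.le_comap_mk' M _) ?_))
  intro h
  have hg1 : zpowers g = ⊥ :=
    comap_injective hsurj (by rw [← h, MonoidHom.comap_bot, QuotientGroup.ker_mk'])
  rw [zpowers_eq_bot] at hg1
  exact (Fact.out : p.Prime).ne_one (hg ▸ hg1 ▸ orderOf_one)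

theorem pow_mem_frattini (hP : IsPGroup p P) (x : P) : x ^ p ∈ frattini P := by
  refine mem_frattini_iff.mpr fun M hM => ?_
  have := hP.normal_of_isCoatom hM
  obtain ⟨g, hgp, hg⟩ := hP.exists_pow_eq_one_and_zpowers_eq_top_of_isCoatom hM
  obtain ⟨k, hk⟩ := mem_zpowers_iff.mp (hg ▸ mem_top (x : P ⧸ M))
  rw [← QuotientGroup.eq_one_iff, QuotientGroup.mk_pow, ← hk, ← zpow_natCast, ← zpow_mul,
    mul_comm, zpow_mul, zpow_natCast, hgp, one_zpow]

theorem commutatorElement_mem_frattini (hP : IsPGroup p P) (x y : P) :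
    ⁅x, y⁆ ∈ frattini P := by
  refine mem_frattini_iff.mpr fun M hM => ?_
  have := hP.normal_of_isCoatom hM
  obtain ⟨g, -, hg⟩ := hP.exists_pow_eq_one_and_zpowers_eq_top_of_isCoatom hM
  obtain ⟨k, hk⟩ := mem_zpowers_iff.mp (hg ▸ mem_top (QuotientGroup.mk' M x))
  obtain ⟨l, hl⟩ := mem_zpowers_iff.mp (hg ▸ mem_top (QuotientGroup.mk' M y))
  rw [← QuotientGroup.eq_one_iff, ← QuotientGroup.mk'_apply, map_commutatorElement,
    commutatorElement_eq_one_iff_mul_comm, ← hk, ← hl]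
  exact (Commute.zpow_zpow_self g k l).eq

theorem isMulCommutative_quotient_frattini (hP : IsPGroup p P) :
    IsMulCommutative (P ⧸ frattini P) := isMulCommutative_iff.mpr fun a b => by
  induction a using QuotientGroup.induction_on with | H x => ?_
  induction b using QuotientGroup.induction_on with | H y => ?_
  rw [← commutatorElement_eq_one_iff_mul_comm]
  exact (QuotientGroup.eq_one_iff _).mpr (hP.commutatorElement_mem_frattini x y)

theorem pow_eq_one_quotient_frattini (hP : IsPGroup p P) (a : P ⧸ frattini P) : a ^ p = 1 := by
  induction a using QuotientGroup.induction_on with | H x => ?_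
  exact (QuotientGroup.eq_one_iff _).mpr (hP.pow_mem_frattini x)

end IsPGroup

/-- A finite `p`-group `P` admits a nontrivial elementary abelian direct factor
(`P ≅ E × Q` internally, with `E` nontrivial elementary abelian) if and only if there is a
nontrivial normal subgroup `N` of `P` with `N ⊓ Φ(P) = ⊥`. -/
theorem elementary_abelian_direct_factor_iff {p : ℕ} [Fact p.Prime] {P : Type*} [Group P]
    [Finite P] (hP : IsPGroup p P) :
    (∃ E Q : Subgroup P, E.Normal ∧ Q.Normal ∧ E ⊓ Q = ⊥ ∧ E ⊔ Q = ⊤ ∧ E ≠ ⊥ ∧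
        (∀ x ∈ E, ∀ y ∈ E, x * y = y * x) ∧ (∀ x ∈ E, x ^ p = 1)) ↔
      ∃ N : Subgroup P, N.Normal ∧ N ≠ ⊥ ∧ N ⊓ frattini P = ⊥ := by
  constructor
  · rintro ⟨E, Q, hE, hQ, hinf, hsup, hE_ne, hcomm, hpow⟩
    exact ⟨E, hE, hE_ne, inf_frattini_eq_bot_of_isCompl ⟨disjoint_iff.mpr hinf,
      codisjoint_iff.mpr hsup⟩ hcomm hpow⟩
  · rintro ⟨N, hN, hN_ne, hNΦ⟩
    have hdisj : Disjoint N (frattini P) := disjoint_iff.mpr hNΦ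
    have := hP.isMulCommutative_quotient_frattini
    have := complementedLattice_of_pow_eq_one hP.pow_eq_one_quotient_frattini
    obtain ⟨Q, hQ, hNQ⟩ := exists_normal_isCompl_of_disjoint hdisj
    refine ⟨N, Q, hN, hQ, hNQ.inf_eq_bot, hNQ.sup_eq_top, hN_ne, fun x hx y hy => ?_,
      fun x hx => disjoint_def.mp hdisj (N.pow_mem hx p) (hP.pow_mem_frattini x)⟩
    rw [← commutatorElement_eq_one_iff_mul_comm]
    exact disjoint_def.mp hdisj (commutator_le_left N N (commutator_mem_commutator hx hy))
      (hP.commutatorElement_mem_frattini x y)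
end

section
/- Let G be a finite group and X a subgroup of G with Φ(G) ≰ X. Then the Möbius function of the subgroup lattice of G satisfies μ(X, G) = 0. -/
/-!
Induct downwards on `X`. Since `X ≠ G`, the defining relation of `μ` gives
`∑_{X ≤ Y ≤ G} μ(Y, G) = 0`. The terms with `Φ(G) ≤ Y` form the analogous sum over
`[X Φ(G), G]`, which also vanishes because `X Φ(G) ≠ G` (the Frattini subgroup is
non-generating). Every remaining term other than `μ(X, G)` vanishes by induction, so
`μ(X, G) = 0`.
-/

open IncidenceAlgebra Finset

theorem wellFoundedGT_of_locallyFiniteOrder {α : Type*} [Preorder α] [OrderTop α]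
    [LocallyFiniteOrder α] : WellFoundedGT α :=
  ⟨(measure fun a : α => #(Icc a ⊤)).wf.mono fun _ _ hab =>
    card_lt_card (Icc_ssubset_Icc_left le_top hab le_rfl)⟩

theorem Finset.Icc_filter_le_eq_Icc_sup {α : Type*} [Lattice α] [LocallyFiniteOrder α]
    (a b c : α) [DecidablePred (c ≤ ·)] : {x ∈ Icc a b | c ≤ x} = Icc (a ⊔ c) b := by
  ext x
  simp only [mem_filter, mem_Icc, sup_le_iff]
  tauto

theorem IncidenceAlgebra.mu_top_eq_zero_of_not_le {𝕜 α : Type*} [Ring 𝕜] [Lattice α]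
    [OrderTop α] [LocallyFiniteOrder α] [DecidableEq α] {z : α}
    (hz : ∀ y, y ⊔ z = ⊤ → y = ⊤) {x : α} (hx : ¬ z ≤ x) : mu 𝕜 x ⊤ = 0 := by
  have := wellFoundedGT_of_locallyFiniteOrder (α := α)
  induction x using WellFoundedGT.induction with
  | _ x ih =>
  classical
  have hx_ne : x ≠ ⊤ := fun h => hx (h ▸ le_top)
  have hxz_ne : x ⊔ z ≠ ⊤ := fun h => hx_ne (hz x h)
  calc mu 𝕜 x ⊤ = ∑ y ∈ Icc x ⊤ with ¬ z ≤ y, mu 𝕜 y ⊤ := by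
        symm
        refine sum_eq_single_of_mem x (mem_filter.2 ⟨left_mem_Icc.2 le_top, hx⟩)
          fun y hy hyx => ?_
        rw [mem_filter, mem_Icc] at hy
        exact ih y (lt_of_le_of_ne hy.1.1 (Ne.symm hyx)) hy.2
    _ = ∑ y ∈ Icc x ⊤, mu 𝕜 y ⊤ - ∑ y ∈ Icc (x ⊔ z) ⊤, mu 𝕜 y ⊤ := by
        rw [← Icc_filter_le_eq_Icc_sup, ← sum_filter_add_sum_filter_not (Icc x ⊤) (z ≤ ·),
          add_sub_cancel_left]
    _ = 0 := by rw [sum_Icc_mu_left, sum_Icc_mu_left, if_neg hx_ne, if_neg hxz_ne, sub_zero]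

/-- (Hawkes–Isaacs–Özaydin) If `X` is a subgroup of a finite group `G` with `Φ(G) ≰ X`,
then the Möbius function of the subgroup lattice of `G` satisfies `μ(X, G) = 0`. -/
theorem mu_subgroup_eq_zero_of_not_frattini_le {G : Type*} [Group G] [Finite G]
    [LocallyFiniteOrder (Subgroup G)] [DecidableEq (Subgroup G)]
    {X : Subgroup G} (h : ¬ frattini G ≤ X) :
    mu ℤ X (⊤ : Subgroup G) = 0 :=
  mu_top_eq_zero_of_not_le (fun _ => frattini_nongenerating) h
end

section
/- Let Q be a finite p-group. Write Q ≅ N × T where T is atoric (Ω₁Z(T) ≤ Φ(T)), N is elementary abelian with N ∩ Φ(Q) = 1, and let q : Q → T be the projection with kernel N. If K ⊴ Q is central, cyclic, contained in Φ(Q), then q(K) is a central cyclic subgroup of T contained in Φ(T), and the induced map Q/K → T/q(K) is surjective with kernel NK/K satisfying (NK/K) ∩ Φ(Q/K) = 1. -/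
/-!
The projection `q` is surjective, so it carries central, cyclic and Frattini subgroups to
subgroups of the same kind. Since `K ≤ Φ(Q)`, the Frattini subgroup of `Q/K` is `Φ(Q)/K`, and
Dedekind's modular law gives `NK ∩ Φ(Q) = K (N ∩ Φ(Q)) = K`, whence `(NK/K) ∩ Φ(Q/K) = 1`.
-/

open QuotientGroup

namespace Subgroup

variable {G H : Type*} [Group G] [Group H]

theorem normal_of_le_center_s17 {K : Subgroup G} (hK : K ≤ center G) : K.Normal :=
  ⟨fun n hn g => by rwa [mem_center_iff.mp (hK hn) g, mul_inv_cancel_right]⟩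

theorem map_le_center_of_surjective {φ : G →* H} (hφ : Function.Surjective φ)
    {K : Subgroup G} (hK : K ≤ center G) : K.map φ ≤ center H := by
  rintro _ ⟨k, hk, rfl⟩
  refine mem_center_iff.mpr fun h => ?_
  obtain ⟨g, rfl⟩ := hφ h
  rw [← map_mul, ← map_mul, mem_center_iff.mp (hK hk) g]

theorem normal_sup_inf_assoc_of_le (K L F : Subgroup G) [K.Normal] (hKF : K ≤ F) :
    (K ⊔ L) ⊓ F = K ⊔ L ⊓ F :=
  SetLike.coe_injective <| by
    rw [coe_inf, normal_mul, normal_mul, mul_inf_assoc _ _ _ hKF]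

theorem isCoatom_map_of_surjective {φ : G →* H} (hφ : Function.Surjective φ)
    {M : Subgroup G} (hker : φ.ker ≤ M) (hM : IsCoatom M) : IsCoatom (M.map φ) := by
  have hcomap : (M.map φ).comap φ = M := comap_map_eq_self hker
  refine ⟨fun htop => hM.1 (by rw [← hcomap, htop, comap_top]), fun B hB => ?_⟩
  have hMB : M < B.comap φ := hcomap ▸ (comap_lt_comap_of_surjective hφ).mpr hB
  rw [← map_comap_eq_self_of_surjective hφ B, hM.2 _ hMB, map_top_of_surjective φ hφ]

end Subgroup

open Subgroup

theorem comap_frattini_eq_of_ker_le_frattini {G H : Type*} [Group G] [Group H] {φ : G →* H}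
    (hφ : Function.Surjective φ) (hker : φ.ker ≤ frattini G) :
    (frattini H).comap φ = frattini G := by
  refine le_antisymm (le_iInf₂ fun M hM => ?_) (frattini_le_comap_frattini_of_surjective hφ)
  have hkerM : φ.ker ≤ M := hker.trans (frattini_le_coatom hM)
  calc (frattini H).comap φ ≤ (M.map φ).comap φ :=
        comap_mono (frattini_le_coatom (isCoatom_map_of_surjective hφ hkerM hM))
    _ = M := comap_map_eq_self hkerM

theorem map_mk'_sup_inf_frattini_eq_bot {G : Type*} [Group G] {K L : Subgroup G} [K.Normal]
    (hKF : K ≤ frattini G) (hL : L ⊓ frattini G = ⊥) :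
    (L ⊔ K).map (mk' K) ⊓ frattini (G ⧸ K) = ⊥ := by
  have hF : (frattini (G ⧸ K)).comap (mk' K) = frattini G :=
    comap_frattini_eq_of_ker_le_frattini (mk'_surjective K) (by rwa [ker_mk'])
  apply comap_injective (mk'_surjective K)
  rw [comap_inf, comap_map_mk', hF, MonoidHom.comap_bot, ker_mk', sup_comm L K, sup_left_idem,
    normal_sup_inf_assoc_of_le K L _ hKF, hL, sup_bot_eq]

theorem central_resolution_reduction_general {N T : Type*}
    [Group N] [Group T]
    (hNfr : MonoidHom.ker (MonoidHom.snd N T) ⊓ frattini (N × T) = ⊥)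
    (K : Subgroup (N × T)) [hK : K.Normal]
    (hKc : K ≤ Subgroup.center (N × T)) (hKcyc : IsCyclic ↥K)
    (hKf : K ≤ frattini (N × T)) :
    Subgroup.map (MonoidHom.snd N T) K ≤ Subgroup.center T ∧
    IsCyclic ↥(Subgroup.map (MonoidHom.snd N T) K) ∧
    Subgroup.map (MonoidHom.snd N T) K ≤ frattini T ∧
    (Subgroup.map (MonoidHom.snd N T) K).Normal ∧
    (∀ (hmapn : (Subgroup.map (MonoidHom.snd N T) K).Normal),
      letI := hmapn
      ∃ f : (N × T) ⧸ K →* T ⧸ Subgroup.map (MonoidHom.snd N T) K,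
        (∀ x : N × T, f (QuotientGroup.mk x) =
          QuotientGroup.mk (MonoidHom.snd N T x)) ∧
        Function.Surjective f ∧
        f.ker = Subgroup.map (QuotientGroup.mk' K)
          (MonoidHom.ker (MonoidHom.snd N T) ⊔ K) ∧
        f.ker ⊓ frattini ((N × T) ⧸ K) = ⊥) := by
  set q := MonoidHom.snd N T
  have hq : Function.Surjective q := fun t => ⟨(1, t), rfl⟩
  have hcenter : K.map q ≤ center T := map_le_center_of_surjective hq hKc
  refine ⟨hcenter, isCyclic_of_surjective _ (q.subgroupMap_surjective K),
    map_le_iff_le_comap.mpr (hKf.trans (frattini_le_comap_frattini_of_surjective hq)),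
    normal_of_le_center_s17 hcenter, fun _ => ?_⟩
  have hKq : K ≤ (K.map q).comap q := le_comap_map q K
  have hker : (map K (K.map q) q hKq).ker = (q.ker ⊔ K).map (mk' K) := by
    rw [ker_map, comap_map_eq, sup_comm]
  refine ⟨map K (K.map q) q hKq, fun _ => rfl,
    map_surjective_of_surjective K _ q (mk_surjective.comp hq) hKq, hker, ?_⟩
  rw [hker]
  exact map_mk'_sup_inf_frattini_eq_bot hKf hNfr

/-- Let `Q = N × T` be a finite `p`-group with `T` atoric, `N` elementary abelian and
`N ∩ Φ(Q) = 1`, and let `q : Q → T` be the projection with kernel `N`. If `K ⊴ Q` is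
central, cyclic and contained in `Φ(Q)`, then `q(K)` is a central cyclic subgroup of `T`
contained in `Φ(T)`, and the induced map `Q/K → T/q(K)` is surjective with kernel `NK/K`
satisfying `(NK/K) ∩ Φ(Q/K) = 1`. -/
theorem central_resolution_reduction {p : ℕ} [Fact p.Prime] {N T : Type*}
    [Group N] [Group T] [Finite N] [Finite T]
    (hNp : IsPGroup p N) (hTp : IsPGroup p T)
    (hNab : ∀ a b : N, a * b = b * a) (hNel : ∀ x : N, x ^ p = 1)
    (hTat : ∀ z ∈ Subgroup.center T, z ^ p = 1 → z ∈ frattini T)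
    (hNfr : MonoidHom.ker (MonoidHom.snd N T) ⊓ frattini (N × T) = ⊥)
    (K : Subgroup (N × T)) [hK : K.Normal]
    (hKc : K ≤ Subgroup.center (N × T)) (hKcyc : IsCyclic ↥K)
    (hKf : K ≤ frattini (N × T)) :
    Subgroup.map (MonoidHom.snd N T) K ≤ Subgroup.center T ∧
    IsCyclic ↥(Subgroup.map (MonoidHom.snd N T) K) ∧
    Subgroup.map (MonoidHom.snd N T) K ≤ frattini T ∧
    (Subgroup.map (MonoidHom.snd N T) K).Normal ∧
    (∀ (hmapn : (Subgroup.map (MonoidHom.snd N T) K).Normal),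
      letI := hmapn
      ∃ f : (N × T) ⧸ K →* T ⧸ Subgroup.map (MonoidHom.snd N T) K,
        (∀ x : N × T, f (QuotientGroup.mk x) =
          QuotientGroup.mk (MonoidHom.snd N T x)) ∧
        Function.Surjective f ∧
        f.ker = Subgroup.map (QuotientGroup.mk' K)
          (MonoidHom.ker (MonoidHom.snd N T) ⊔ K) ∧
        f.ker ⊓ frattini ((N × T) ⧸ K) = ⊥) :=
  central_resolution_reduction_general hNfr K (hK := hK) hKc hKcyc hKf
end
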